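/- arXiv:1311.4394 — 2 statements merged into one kernel-verified Lean document; each statement's English description precedes it below -/
import Mathlib

section
/- The function H(x) = 2x·lg(1/x) + (1−2x)·lg(2/(1−2x)) + x + 1, defined for 0 < x < 1/2, attains its maximum at x = 1 − √2/2, and the maximum value is 2 + lg(1+√2), which is less than 3.272. -/
/-!
Writing `p = 2x`, the function is a perspective sum of logarithms,
`H x = p · lg (4√2 / p) + (1 - p) · lg (4 / (1 - p))`,
so by concavity of `lg` (two-point Jensen) `H x ≤ lg (4√2 + 4) = 2 + lg (1 + √2)`, with equality
exactly when `4√2 / p = 4 / (1 - p)`, i.e. `p = 2 - √2`. The numerical bound is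
`(1 + √2)^125 < 2^159`, since `159 / 125 = 1.272`.
-/

noncomputable def H (x : ℝ) : ℝ :=
  2 * x * Real.logb 2 (1 / x) + (1 - 2 * x) * Real.logb 2 (2 / (1 - 2 * x)) + x + 1

open Real Set

theorem Real.concaveOn_logb_Ioi {b : ℝ} (hb : 1 ≤ b) : ConcaveOn ℝ (Ioi 0) (logb b) := by
  have hlogb : logb b = (log b)⁻¹ • log := by
    ext x
    simp [logb, div_eq_inv_mul]
  rw [hlogb]
  exact strictConcaveOn_log_Ioi.concaveOn.smul (inv_nonneg.2 (log_nonneg hb))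

theorem ConcaveOn.mul_comp_div_add_mul_comp_div_le {f : ℝ → ℝ} (hf : ConcaveOn ℝ (Ioi 0) f)
    {p₁ p₂ q₁ q₂ : ℝ} (hp₁ : 0 < p₁) (hp₂ : 0 < p₂) (hq₁ : 0 < q₁) (hq₂ : 0 < q₂)
    (hp : p₁ + p₂ = 1) :
    p₁ * f (q₁ / p₁) + p₂ * f (q₂ / p₂) ≤ f (q₁ + q₂) := by
  have h := hf.2 (mem_Ioi.2 (div_pos hq₁ hp₁)) (mem_Ioi.2 (div_pos hq₂ hp₂)) hp₁.le hp₂.le hp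
  simpa only [smul_eq_mul, mul_div_cancel₀ _ hp₁.ne', mul_div_cancel₀ _ hp₂.ne'] using h

theorem logb_two_sqrt_two : logb 2 √2 = 1 / 2 := by
  rw [sqrt_eq_rpow, logb_rpow two_pos (by norm_num)]

theorem H_eq_perspective {x : ℝ} (hx : 0 < x) (hx' : x < 1 / 2) :
    H x = 2 * x * logb 2 (4 * √2 / (2 * x)) + (1 - 2 * x) * logb 2 (4 / (1 - 2 * x)) := by
  have h₁ : logb 2 (4 * √2 / (2 * x)) = 3 / 2 + logb 2 (1 / x) := by
    rw [show 4 * √2 / (2 * x) = 2 * √2 * (1 / x) by field_simp; ring,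
      logb_mul (by positivity) (by positivity), logb_mul two_ne_zero (by positivity),
      logb_self_eq_one one_lt_two, logb_two_sqrt_two]
    norm_num
  have h₂ : logb 2 (4 / (1 - 2 * x)) = 1 + logb 2 (2 / (1 - 2 * x)) := by
    have : 1 - 2 * x ≠ 0 := by linarith
    rw [show 4 / (1 - 2 * x) = 2 * (2 / (1 - 2 * x)) by field_simp; norm_num,
      logb_mul two_ne_zero (by positivity), logb_self_eq_one one_lt_two]
  rw [H, h₁, h₂]
  ring

theorem logb_two_four_mul_sqrt_two_add_four : logb 2 (4 * √2 + 4) = 2 + logb 2 (1 + √2) := by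
  rw [show 4 * √2 + 4 = 2 ^ 2 * (1 + √2) by ring, logb_mul (by norm_num) (by positivity),
    logb_pow, logb_self_eq_one one_lt_two]
  norm_num

theorem H_le {x : ℝ} (hx : 0 < x) (hx' : x < 1 / 2) : H x ≤ 2 + logb 2 (1 + √2) := by
  rw [H_eq_perspective hx hx', ← logb_two_four_mul_sqrt_two_add_four]
  exact (concaveOn_logb_Ioi one_le_two).mul_comp_div_add_mul_comp_div_le (by linarith)
    (by linarith) (by positivity) four_pos (by ring)

theorem H_one_sub_sqrt_two_div_two : H (1 - √2 / 2) = 2 + logb 2 (1 + √2) := by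
  have hs : √2 ^ 2 = 2 := sq_sqrt zero_le_two
  have hs₁ : 1 < √2 := by nlinarith [sqrt_nonneg 2]
  have hs₂ : √2 < 2 := by nlinarith
  have h₁ : 4 * √2 / (2 * (1 - √2 / 2)) = 4 * √2 + 4 := by
    rw [div_eq_iff (by linarith)]
    nlinarith
  have h₂ : 4 / (1 - 2 * (1 - √2 / 2)) = 4 * √2 + 4 := by
    rw [div_eq_iff (by linarith)]
    nlinarith
  rw [H_eq_perspective (by linarith) (by linarith), h₁, h₂,
    ← logb_two_four_mul_sqrt_two_add_four]
  ring

theorem logb_two_one_add_sqrt_two_lt : logb 2 (1 + √2) < 1.272 := by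
  have hs : √2 < 1.41421357 := by
    rw [sqrt_lt' (by norm_num)]
    norm_num
  have hpow : (1 + √2) ^ 125 < 2 ^ 159 :=
    calc (1 + √2) ^ 125 < (2.41421357 : ℝ) ^ 125 := by gcongr; linarith
      _ < 2 ^ 159 := by norm_num
  have hlogb := logb_lt_logb one_lt_two (by positivity) hpow
  rw [logb_pow, logb_pow, logb_self_eq_one one_lt_two] at hlogb
  norm_num at hlogb ⊢
  linarith

/-- On `(0, 1/2)`, `H` attains its maximum at `x = 1 − √2/2`, and the maximum value is
`2 + lg(1+√2) < 3.272`. -/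
theorem stmt11 :
    (0 < 1 - Real.sqrt 2 / 2 ∧ 1 - Real.sqrt 2 / 2 < 1 / 2) ∧
    (∀ x : ℝ, 0 < x → x < 1 / 2 → H x ≤ H (1 - Real.sqrt 2 / 2)) ∧
    H (1 - Real.sqrt 2 / 2) = 2 + Real.logb 2 (1 + Real.sqrt 2) ∧
    2 + Real.logb 2 (1 + Real.sqrt 2) < 3.272 := by
  have hs : √2 ^ 2 = 2 := sq_sqrt zero_le_two
  have hs₁ : 1 < √2 := by nlinarith [sqrt_nonneg 2]
  refine ⟨⟨by nlinarith, by linarith⟩, fun x hx hx' => ?_, H_one_sub_sqrt_two_div_two, ?_⟩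
  · rw [H_one_sub_sqrt_two_div_two]
    exact H_le hx hx'
  · linarith [logb_two_one_add_sqrt_two_lt]
end

section
/- If t(n) are the coefficients of the power series T(x) satisfying T(x) = x + 2xT(x) + 2xT(x)², then lg t(n) ≥ n·lg(2/(√2−1)) − O(log n); in particular lg t(n) ≥ 2.271·n − O(log n). -/
/-!
Put `V = 1 + 2T`; the equation becomes `V = 1 + X + X V²`, whose solution is unique and equals
`(1 + X) C(X(1 + X))` for the Catalan series `C = 1 + X C²`. As `X(1 + X)` has nonnegative
coefficients, the `n`-th coefficient of a series substituted at `X(1 + X)` depends monotonically on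
its first `n + 1` coefficients, so `4ᵏ ≤ (2k + 1)(k + 1) Catₖ` for `k ≤ n` bounds `[Xⁿ] C(X(1 + X))`
from below by `[Xⁿ] 1/(1 - 4X - 4X²)` up to the factor `(2n + 1)(n + 1)`. The latter coefficients
satisfy `gₙ₊₂ = 4gₙ₊₁ + 4gₙ` and hence grow like `(2 + 2√2)ⁿ = (2/(√2 - 1))ⁿ`.
-/

open PowerSeries Finset Real

namespace PowerSeries

section CommRing

variable {R : Type*} [CommRing R]

theorem coeff_pow_eq_zero_of_lt {y : R⟦X⟧} (hy : constantCoeff y = 0) {n d : ℕ} (h : n < d) :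
    coeff n (y ^ d) = 0 :=
  X_pow_dvd_iff.1 (pow_dvd_pow_of_dvd (X_dvd_iff.2 hy) d) n h

theorem coeff_subst_eq_sum_range {y : R⟦X⟧} (hy : constantCoeff y = 0) (f : R⟦X⟧) (n : ℕ) :
    coeff n (f.subst y) = ∑ d ∈ range (n + 1), coeff d f * coeff n (y ^ d) := by
  rw [coeff_subst' (HasSubst.of_constantCoeff_zero' hy)]
  refine finsum_eq_sum_of_support_subset _ fun d hd => ?_
  by_contra h
  simp only [coe_range, Set.mem_Iio, not_lt] at h
  exact hd (by simp [coeff_pow_eq_zero_of_lt hy (by omega : n < d)])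

theorem eq_of_eq_add_X_mul_sq {P V W : R⟦X⟧} (hV : V = P + X * V ^ 2) (hW : W = P + X * W ^ 2) :
    V = W := by
  have hunit : IsUnit (1 - X * (V + W)) := isUnit_iff_constantCoeff.2 (by simp)
  rw [← sub_eq_zero, ← hunit.mul_left_eq_zero]
  linear_combination hV - hW

end CommRing

section OrderedCommRing

variable {R : Type*} [CommRing R] [PartialOrder R] [IsOrderedRing R]

theorem coeff_mul_nonneg {f g : R⟦X⟧} (hf : ∀ n, 0 ≤ coeff n f) (hg : ∀ n, 0 ≤ coeff n g)
    (n : ℕ) : 0 ≤ coeff n (f * g) := by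
  rw [coeff_mul]
  exact sum_nonneg fun p _ => mul_nonneg (hf p.1) (hg p.2)

theorem coeff_pow_nonneg {f : R⟦X⟧} (hf : ∀ n, 0 ≤ coeff n f) (d n : ℕ) :
    0 ≤ coeff n (f ^ d) := by
  induction d generalizing n with
  | zero => rw [pow_zero, coeff_one]; split_ifs <;> simp
  | succ d ih => rw [pow_succ]; exact coeff_mul_nonneg ih hf n

theorem coeff_subst_mono {y : R⟦X⟧} (hy0 : constantCoeff y = 0) (hy : ∀ n, 0 ≤ coeff n y)
    {f g : R⟦X⟧} {n : ℕ} (hfg : ∀ d ≤ n, coeff d f ≤ coeff d g) :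
    coeff n (f.subst y) ≤ coeff n (g.subst y) := by
  rw [coeff_subst_eq_sum_range hy0, coeff_subst_eq_sum_range hy0]
  exact sum_le_sum fun d hd =>
    mul_le_mul_of_nonneg_right (hfg d (Nat.lt_succ_iff.1 (mem_range.1 hd)))
      (coeff_pow_nonneg hy d n)

theorem coeff_subst_nonneg {y : R⟦X⟧} (hy0 : constantCoeff y = 0) (hy : ∀ n, 0 ≤ coeff n y)
    {f : R⟦X⟧} (hf : ∀ n, 0 ≤ coeff n f) (n : ℕ) : 0 ≤ coeff n (f.subst y) := by
  rw [coeff_subst_eq_sum_range hy0]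
  exact sum_nonneg fun d _ => mul_nonneg (hf d) (coeff_pow_nonneg hy d n)

end OrderedCommRing

end PowerSeries

theorem pow_le_of_linear_recurrence {g : ℕ → ℝ} {p q r a : ℝ} (hp : 0 ≤ p) (hq : 0 ≤ q)
    (hr : r ^ 2 = p * r + q) (hrec : ∀ n, g (n + 2) = p * g (n + 1) + q * g n)
    (h0 : a ≤ g 0) (h1 : a * r ≤ g 1) (n : ℕ) : a * r ^ n ≤ g n := by
  suffices a * r ^ n ≤ g n ∧ a * r ^ (n + 1) ≤ g (n + 1) from this.1
  induction n with
  | zero => simpa using ⟨h0, h1⟩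
  | succ n ih =>
    refine ⟨ih.2, ?_⟩
    calc a * r ^ (n + 2) = p * (a * r ^ (n + 1)) + q * (a * r ^ n) := by
          linear_combination a * r ^ n * hr
      _ ≤ g (n + 2) := by
          rw [hrec]; gcongr
          exacts [ih.2, ih.1]

theorem four_pow_le_mul_catalan (k : ℕ) : 4 ^ k ≤ (2 * k + 1) * (k + 1) * catalan k := by
  rw [mul_assoc, succ_mul_catalan_eq_centralBinom]
  exact Nat.four_pow_le_two_mul_add_one_mul_central_binom k

lemma constantCoeff_X_mul_one_add_X : constantCoeff (X * (1 + X) : ℝ⟦X⟧) = 0 := by simp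

lemma coeff_X_mul_one_add_X_nonneg (n : ℕ) : 0 ≤ coeff n (X * (1 + X) : ℝ⟦X⟧) := by
  rw [mul_add, mul_one, ← sq, map_add, coeff_X, coeff_X_pow]
  positivity

lemma hasSubst_X_mul_one_add_X : HasSubst (X * (1 + X) : ℝ⟦X⟧) :=
  HasSubst.of_constantCoeff_zero' constantCoeff_X_mul_one_add_X

noncomputable def catalanSubst : ℝ⟦X⟧ :=
  (catalanSeries.map (Nat.castRingHom ℝ)).subst (X * (1 + X) : ℝ⟦X⟧)

noncomputable def fourPowSubst : ℝ⟦X⟧ :=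
  (mk fun n => (4 : ℝ) ^ n).subst (X * (1 + X) : ℝ⟦X⟧)

lemma catalanSubst_eq : catalanSubst = 1 + X * (1 + X) * catalanSubst ^ 2 := by
  rw [catalanSubst, ← coe_substAlgHom hasSubst_X_mul_one_add_X]
  conv_lhs => rw [← catalanSeries_sq_mul_X_add_one]
  simp only [map_add, map_mul, map_pow, map_X, map_one, coe_substAlgHom,
    subst_X hasSubst_X_mul_one_add_X]
  ring

lemma fourPowSubst_eq : fourPowSubst = 1 + 4 * X * fourPowSubst + 4 * X ^ 2 * fourPowSubst := by
  have h := congrArg (rescale (4 : ℝ)) (mk_one_mul_one_sub_eq_one ℝ)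
  simp only [rescale_mk, map_mul, map_sub, map_one, rescale_X, Pi.one_apply, mul_one] at h
  have h' := congrArg (substAlgHom hasSubst_X_mul_one_add_X) h
  simp only [map_mul, map_sub, map_one, map_ofNat, coe_substAlgHom,
    subst_X hasSubst_X_mul_one_add_X] at h'
  rw [fourPowSubst]
  linear_combination h'

lemma coeff_fourPowSubst_add_two (n : ℕ) :
    coeff (n + 2) fourPowSubst = 4 * coeff (n + 1) fourPowSubst + 4 * coeff n fourPowSubst := by
  conv_lhs => rw [fourPowSubst_eq]
  simp [mul_assoc, coeff_X_pow_mul', coeff_succ_X_mul, coeff_one, ← map_ofNat C, coeff_C_mul]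

lemma coeff_zero_fourPowSubst : coeff 0 fourPowSubst = 1 := by
  conv_lhs => rw [fourPowSubst_eq]
  simp [mul_assoc, ← map_ofNat C]

lemma coeff_one_fourPowSubst : coeff 1 fourPowSubst = 4 := by
  conv_lhs => rw [fourPowSubst_eq]
  simp [mul_assoc, coeff_X_pow_mul', coeff_succ_X_mul, coeff_zero_fourPowSubst, ← map_ofNat C,
    coeff_C_mul]

lemma two_add_two_mul_sqrt_two_sq : (2 + 2 * √2) ^ 2 = 4 * (2 + 2 * √2) + 4 := by
  nlinarith [sq_sqrt (zero_le_two : (0:ℝ) ≤ 2)]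

lemma pow_le_two_mul_coeff_fourPowSubst (n : ℕ) :
    (2 + 2 * √2) ^ n ≤ 2 * coeff n fourPowSubst := by
  have h := pow_le_of_linear_recurrence (g := fun n => coeff n fourPowSubst) (a := 1 / 2)
    (by norm_num) (by norm_num) two_add_two_mul_sqrt_two_sq coeff_fourPowSubst_add_two
    (by rw [coeff_zero_fourPowSubst]; norm_num) ?_ n
  · linarith
  · rw [coeff_one_fourPowSubst]
    nlinarith [sq_sqrt (zero_le_two : (0:ℝ) ≤ 2), sqrt_nonneg 2]

lemma coeff_fourPowSubst_le (n : ℕ) :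
    coeff n fourPowSubst ≤ ((2 * n + 1) * (n + 1) : ℝ) * coeff n catalanSubst := by
  have h := coeff_subst_mono constantCoeff_X_mul_one_add_X coeff_X_mul_one_add_X_nonneg
    (f := mk fun d => (4 : ℝ) ^ d)
    (g := ((2 * n + 1) * (n + 1) : ℝ) • catalanSeries.map (Nat.castRingHom ℝ)) (n := n)
    fun d hd => by
      have hd' : (d : ℝ) ≤ n := by exact_mod_cast hd
      have hcat : (4 : ℝ) ^ d ≤ (2 * d + 1) * (d + 1) * catalan d := by
        exact_mod_cast four_pow_le_mul_catalan d
      simp only [coeff_mk, coeff_smul, coeff_map, catalanSeries_coeff, eq_natCast, smul_eq_mul]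
      refine hcat.trans (mul_le_mul_of_nonneg_right ?_ (Nat.cast_nonneg _))
      gcongr
  rwa [subst_smul hasSubst_X_mul_one_add_X, coeff_smul, smul_eq_mul] at h

lemma coeff_catalanSubst_nonneg (n : ℕ) : 0 ≤ coeff n catalanSubst :=
  coeff_subst_nonneg constantCoeff_X_mul_one_add_X coeff_X_mul_one_add_X_nonneg
    (fun d => by simp) n

lemma coeff_catalanSubst_le (n : ℕ) :
    coeff n catalanSubst ≤ coeff n ((1 + X) * catalanSubst) := by
  have : 0 ≤ coeff n (X * catalanSubst) :=
    coeff_mul_nonneg (fun m => by rw [coeff_X]; positivity) coeff_catalanSubst_nonneg n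
  rw [add_mul, one_mul, map_add]
  linarith

lemma one_add_two_mul_eq_one_add_X_mul_catalanSubst {T : ℝ⟦X⟧}
    (heq : T = X + 2 * X * T + 2 * X * T ^ 2) :
    1 + 2 * T = (1 + X) * catalanSubst := by
  refine eq_of_eq_add_X_mul_sq (P := 1 + X) ?_ ?_
  · linear_combination 2 * heq
  · linear_combination (1 + X) * catalanSubst_eq

lemma pow_div_le_coeff {T : ℝ⟦X⟧} (heq : T = X + 2 * X * T + 2 * X * T ^ 2) {n : ℕ}
    (hn : 1 ≤ n) : (2 + 2 * √2) ^ n / (4 * ((2 * n + 1) * (n + 1))) ≤ coeff n T := by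
  have hT : coeff n ((1 + X) * catalanSubst) = 2 * coeff n T := by
    rw [← one_add_two_mul_eq_one_add_X_mul_catalanSubst heq, map_add, coeff_one, if_neg (by omega),
      ← map_ofNat C, coeff_C_mul, zero_add]
  rw [div_le_iff₀ (by positivity)]
  calc (2 + 2 * √2) ^ n ≤ 2 * coeff n fourPowSubst := pow_le_two_mul_coeff_fourPowSubst n
    _ ≤ 2 * (((2 * n + 1) * (n + 1) : ℝ) * coeff n ((1 + X) * catalanSubst)) := by
      grw [coeff_fourPowSubst_le, coeff_catalanSubst_le]
    _ = coeff n T * (4 * ((2 * n + 1) * (n + 1))) := by rw [hT]; ring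

lemma two_div_sqrt_two_sub_one : 2 / (√2 - 1) = 2 + 2 * √2 := by
  have h : √2 ^ 2 = 2 := sq_sqrt zero_le_two
  have : √2 - 1 ≠ 0 := by nlinarith [sqrt_nonneg 2]
  field_simp
  linear_combination -h

lemma lt_logb_two_two_add_two_mul_sqrt_two : 2.271 < logb 2 (2 + 2 * √2) := by
  have hsqrt : (1.4142 : ℝ) ≤ √2 := by
    rw [le_sqrt (by norm_num) zero_le_two]; norm_num
  rw [lt_logb_iff_rpow_lt one_lt_two (by positivity)]
  have key : ((2 : ℝ) ^ (2.271 : ℝ)) ^ 1000 < (4.8284 : ℝ) ^ 1000 := by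
    rw [← rpow_natCast, ← rpow_mul zero_le_two, show (4.8284 : ℝ) = 12071 / 2500 by norm_num,
      div_pow, lt_div_iff₀ (by positivity)]
    norm_num
    rw [show 2271 = 227 * 10 + 1 from rfl, show 1000 = 100 * 10 from rfl, pow_succ, pow_mul,
      pow_mul, pow_mul]
    norm_num
  linarith [lt_of_pow_lt_pow_left₀ 1000 (by norm_num) key]

lemma four_mul_le_pow_six {n : ℕ} (hn : 2 ≤ n) :
    4 * ((2 * n + 1) * (n + 1) : ℝ) ≤ (n : ℝ) ^ 6 := by
  have h : (2 : ℝ) ≤ n := by exact_mod_cast hn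
  have h4 : (16 : ℝ) * n ^ 2 ≤ n ^ 4 * n ^ 2 := by
    gcongr; linarith [pow_le_pow_left₀ zero_le_two h 4]
  nlinarith

theorem stmt13_general (T : PowerSeries ℝ)
    (heq : T = PowerSeries.X + 2 * PowerSeries.X * T + 2 * PowerSeries.X * T ^ 2) :
    Real.logb 2 (2 / (Real.sqrt 2 - 1)) > 2.271 ∧
    ∃ C : ℝ, 0 < C ∧ ∀ n : ℕ, 2 ≤ n →
      (n : ℝ) * Real.logb 2 (2 / (Real.sqrt 2 - 1)) - C * Real.logb 2 n ≤
        Real.logb 2 (PowerSeries.coeff n T) := by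
  rw [two_div_sqrt_two_sub_one]
  refine ⟨lt_logb_two_two_add_two_mul_sqrt_two, 6, by norm_num, fun n hn => ?_⟩
  have hn0 : (0 : ℝ) < n := by exact_mod_cast (by omega : 0 < n)
  calc (n : ℝ) * logb 2 (2 + 2 * √2) - 6 * logb 2 n
        = logb 2 ((2 + 2 * √2) ^ n / (n : ℝ) ^ 6) := by
        rw [logb_div (by positivity) (by positivity), logb_pow, logb_pow]; push_cast; ring
    _ ≤ logb 2 ((2 + 2 * √2) ^ n / (4 * ((2 * n + 1) * (n + 1)))) :=
        logb_le_logb_of_le one_lt_two (by positivity)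
          (div_le_div_of_nonneg_left (by positivity) (by positivity) (four_mul_le_pow_six hn))
    _ ≤ logb 2 (coeff n T) :=
        logb_le_logb_of_le one_lt_two (by positivity) (pow_div_le_coeff heq (by omega))

/-- If `t(n)` are the coefficients of the power series `T` satisfying
`T = x + 2xT + 2xT²`, then `lg t(n) ≥ n·lg(2/(√2−1)) − O(log n)`;
in particular `lg t(n) ≥ 2.271·n − O(log n)` since `lg(2/(√2−1)) > 2.271`. -/
theorem stmt13 (T : PowerSeries ℝ)
    (h0 : PowerSeries.constantCoeff T = 0)
    (heq : T = PowerSeries.X + 2 * PowerSeries.X * T + 2 * PowerSeries.X * T ^ 2) :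
    Real.logb 2 (2 / (Real.sqrt 2 - 1)) > 2.271 ∧
    ∃ C : ℝ, 0 < C ∧ ∀ n : ℕ, 2 ≤ n →
      (n : ℝ) * Real.logb 2 (2 / (Real.sqrt 2 - 1)) - C * Real.logb 2 n ≤
        Real.logb 2 (PowerSeries.coeff n T) :=
  stmt13_general T heq
end
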